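/- In QHC, ⊢ ∇α → ¬¬α, where ∇α := !?α; moreover, the schema ∇α → ¬¬α is equivalent, over the remaining axioms, to the axiom ¬!0. -/

import Mathlib

/- Problem (intuitionistic) formulas and proposition (classical) formulas of QHC. -/
mutual
inductive PF : Type
  | var : Nat → PF
  | bot : PF
  | and : PF → PF → PF
  | or : PF → PF → PF
  | imp : PF → PF → PF
  | bang : CF → PF
inductive CF : Type
  | var : Nat → CF
  | fls : CF
  | and : CF → CF → CF
  | or : CF → CF → CF
  | imp : CF → CF → CF
  | quest : PF → CF
end

def PF.neg (α : PF) : PF := α.imp PF.bot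
def CF.neg (p : CF) : CF := p.imp CF.fls
def PF.iff (α β : PF) : PF := (α.imp β).and (β.imp α)
def CF.iff (p q : CF) : CF := (p.imp q).and (q.imp p)
def CF.box (p : CF) : CF := CF.quest (PF.bang p)
def PF.nabla (α : PF) : PF := PF.bang (CF.quest α)

/- Derivability in QHC, parameterized by a set `Ax` of extra problem axioms
(used to treat the axiom ¬!0 and its variants uniformly). Intuitionistic logic
on problems, classical logic on propositions, the rules α ⊢ ?α and p ⊢ !p, and
the mixed axioms ?!p → p, α → !?α, !(p→q) → (!p → !q), ?(α→β) → (?α → ?β). -/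
mutual
inductive ProvP (Ax : PF → Prop) : PF → Prop
  | axm {α} : Ax α → ProvP Ax α
  | mp {α β} : ProvP Ax (α.imp β) → ProvP Ax α → ProvP Ax β
  | ak (α β : PF) : ProvP Ax (α.imp (β.imp α))
  | as (α β γ : PF) : ProvP Ax ((α.imp (β.imp γ)).imp ((α.imp β).imp (α.imp γ)))
  | andI (α β : PF) : ProvP Ax (α.imp (β.imp (α.and β)))
  | andE1 (α β : PF) : ProvP Ax ((α.and β).imp α)
  | andE2 (α β : PF) : ProvP Ax ((α.and β).imp β)
  | orI1 (α β : PF) : ProvP Ax (α.imp (α.or β))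
  | orI2 (α β : PF) : ProvP Ax (β.imp (α.or β))
  | orE (α β γ : PF) : ProvP Ax ((α.imp γ).imp ((β.imp γ).imp ((α.or β).imp γ)))
  | exf (α : PF) : ProvP Ax (PF.bot.imp α)
  | bangIntro {p} : ProvC Ax p → ProvP Ax (PF.bang p)
  | bangImp (p q : CF) : ProvP Ax ((PF.bang (p.imp q)).imp ((PF.bang p).imp (PF.bang q)))
  | bangQuest (α : PF) : ProvP Ax (α.imp (PF.bang (CF.quest α)))
inductive ProvC (Ax : PF → Prop) : CF → Prop
  | mp {p q} : ProvC Ax (p.imp q) → ProvC Ax p → ProvC Ax q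
  | ak (p q : CF) : ProvC Ax (p.imp (q.imp p))
  | as (p q r : CF) : ProvC Ax ((p.imp (q.imp r)).imp ((p.imp q).imp (p.imp r)))
  | andI (p q : CF) : ProvC Ax (p.imp (q.imp (p.and q)))
  | andE1 (p q : CF) : ProvC Ax ((p.and q).imp p)
  | andE2 (p q : CF) : ProvC Ax ((p.and q).imp q)
  | orI1 (p q : CF) : ProvC Ax (p.imp (p.or q))
  | orI2 (p q : CF) : ProvC Ax (q.imp (p.or q))
  | orE (p q r : CF) : ProvC Ax ((p.imp r).imp ((q.imp r).imp ((p.or q).imp r)))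
  | exf (p : CF) : ProvC Ax (CF.fls.imp p)
  | lem (p : CF) : ProvC Ax (p.or (p.imp CF.fls))
  | questIntro {α} : ProvP Ax α → ProvC Ax (CF.quest α)
  | questImp (α β : PF) : ProvC Ax ((CF.quest (α.imp β)).imp ((CF.quest α).imp (CF.quest β)))
  | questBang (p : CF) : ProvC Ax ((CF.quest (PF.bang p)).imp p)
end

/-- The axiom (!⊥): ¬!0. -/
def QHCAx : PF → Prop := fun α => α = (PF.bang CF.fls).imp PF.bot

/-- Derivability of a problem in QHC. -/
def PrvP (α : PF) : Prop := ProvP QHCAx α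
/-- Derivability of a proposition in QHC. -/
def PrvC (p : CF) : Prop := ProvC QHCAx p

/-- The schema ∇α → ¬¬α as a set of problem axioms. -/
def NablaNegNegAx : PF → Prop :=
  fun β => ∃ α : PF, β = (PF.nabla α).imp (PF.neg (PF.neg α))

/-! Everything rests on `?⊥ → p`: from `⊥` we get `?⊥ → ?!p`, and `?!p → p`. Hence `∇⊥ → !p`,
while `!0 → ∇α` by `0 → ?α`, so `¬!0` and `¬∇⊥` are interderivable. Given `¬∇⊥`, a problem `¬α`
yields `∇¬α` and hence `∇α → ∇⊥ → ⊥`, which is `∇α → ¬¬α` after swapping premises. Conversely,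
the instance `∇⊥ → ¬¬⊥` of the schema gives `¬∇⊥` since `¬⊥` is provable. -/

namespace ProvC
variable {Ax : PF → Prop}

theorem comp {p q r : CF} (h₁ : ProvC Ax (p.imp q)) (h₂ : ProvC Ax (q.imp r)) :
    ProvC Ax (p.imp r) :=
  mp (mp (as p q r) (mp (ak (q.imp r) p) h₂)) h₁

theorem quest_bot_imp (p : CF) : ProvC Ax ((CF.quest PF.bot).imp p) :=
  comp (mp (questImp PF.bot (PF.bang p)) (questIntro (ProvP.exf _))) (questBang p)

end ProvC

namespace ProvP
variable {Ax : PF → Prop}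

theorem imp_self (α : PF) : ProvP Ax (α.imp α) :=
  mp (mp (as α (α.imp α) α) (ak α (α.imp α))) (ak α α)

theorem comp {α β γ : PF} (h₁ : ProvP Ax (α.imp β)) (h₂ : ProvP Ax (β.imp γ)) :
    ProvP Ax (α.imp γ) :=
  mp (mp (as α β γ) (mp (ak (β.imp γ) α) h₂)) h₁

theorem imp_imp_imp_right {β γ : PF} (α : PF) (h : ProvP Ax (β.imp γ)) :
    ProvP Ax ((α.imp β).imp (α.imp γ)) :=
  mp (as α β γ) (mp (ak (β.imp γ) α) h)

theorem swap {α β γ : PF} (h : ProvP Ax (α.imp (β.imp γ))) : ProvP Ax (β.imp (α.imp γ)) :=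
  comp (ak β α) (mp (as α β γ) h)

theorem bang_mono {p q : CF} (h : ProvC Ax (p.imp q)) :
    ProvP Ax ((PF.bang p).imp (PF.bang q)) :=
  mp (bangImp p q) (bangIntro h)

theorem nabla_imp (α β : PF) :
    ProvP Ax ((PF.nabla (α.imp β)).imp ((PF.nabla α).imp (PF.nabla β))) :=
  comp (bang_mono (ProvC.questImp α β)) (bangImp _ _)

theorem nabla_bot_imp_bang (p : CF) : ProvP Ax ((PF.nabla PF.bot).imp (PF.bang p)) :=
  bang_mono (ProvC.quest_bot_imp p)

theorem bang_fls_imp_nabla (α : PF) : ProvP Ax ((PF.bang CF.fls).imp (PF.nabla α)) :=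
  bang_mono (ProvC.exf _)

theorem neg_nabla_bot_iff : ProvP Ax (PF.nabla PF.bot).neg ↔ ProvP Ax (PF.bang CF.fls).neg :=
  ⟨comp (bang_fls_imp_nabla _), comp (nabla_bot_imp_bang _)⟩

theorem nabla_imp_neg_neg (h : ProvP Ax (PF.bang CF.fls).neg) (α : PF) :
    ProvP Ax ((PF.nabla α).imp α.neg.neg) :=
  swap <| comp (bangQuest α.neg) <|
    comp (nabla_imp α PF.bot) (imp_imp_imp_right _ (neg_nabla_bot_iff.2 h))

theorem neg_bang_fls_of_nabla_imp_neg_neg (h : ProvP Ax ((PF.nabla PF.bot).imp PF.bot.neg.neg)) :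
    ProvP Ax (PF.bang CF.fls).neg :=
  neg_nabla_bot_iff.1 (mp (swap h) (imp_self PF.bot))

end ProvP

theorem qhc_nabla_negneg :
    (∀ α : PF, PrvP ((PF.nabla α).imp (PF.neg (PF.neg α)))) ∧
    ProvP NablaNegNegAx ((PF.bang CF.fls).imp PF.bot) :=
  ⟨ProvP.nabla_imp_neg_neg (ProvP.axm rfl),
    ProvP.neg_bang_fls_of_nabla_imp_neg_neg (ProvP.axm ⟨PF.bot, rfl⟩)⟩
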